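/- arXiv:1803.05875 — 2 statements merged into one kernel-verified Lean document; each statement's English description precedes it below -/
import Mathlib

section
/- In the Gaussian sequence model $y_k = b_k\theta_k + \varepsilon\xi_k$, let $T_D = \sum_{k=1}^D b_k^{-2}(y_k^2 - \varepsilon^2)$ and threshold $t = C_1 \varepsilon^2 \sqrt{\sum_{k=1}^D b_k^{-4}}$ with $C_1 > 0$. Suppose $C > C_1$ satisfies $(2 + 4C)/(C - C_1)^2 \leq \beta$ and $\varepsilon \leq 1$ and $\max_{1\le l\le D} b_l^{-2} \leq \sqrt{\sum_{k=1}^D b_k^{-4}}$. If $\sum_{k=1}^D \theta_k^2 > C \varepsilon^2 \sqrt{\sum_{k=1}^D b_k^{-4}}$, then $\mathbb{P}_\theta(T_D \leq t) \leq \beta$. -/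
/-!
Chebyshev's inequality applied to `T_D`. Each summand `b⁻²((bθ + εξ)² - ε²)` is an unbiased
estimate of `θ²`, a quadratic polynomial in the standard Gaussian `ξ`, whose variance
`4ε²θ²b⁻² + 2ε⁴b⁻⁴` follows from the Gaussian moments `E ξ³ = 0`, `E ξ⁴ = 3` (read off the
derivatives of the moment generating function `exp (t² / 2)` at `0`). By independence the
variances add up to `2ε⁴ ∑ b⁻⁴ + 4ε² ∑ θ² b⁻²`, and the assumption on `max b⁻²` bounds this by
`2r² + 4r m` with `r = ε² √(∑ b⁻⁴)` and `m = ∑ θ² = E T_D`. Since `m > C r`, the event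
`T_D ≤ C₁ r` is a deviation of at least `m - C₁ r` below the mean, and
`(2r² + 4rm) / (m - C₁r)²`, decreasing in `m / r`, is at most `(2 + 4C) / (C - C₁)²`.
-/

open MeasureTheory ProbabilityTheory Finset Real

lemma integral_pow_gaussianReal_eq_iteratedDeriv (n : ℕ) :
    ∫ x, x ^ n ∂gaussianReal 0 1 = iteratedDeriv n (fun t ↦ rexp (t ^ 2 / 2)) 0 := by
  have h := iteratedDeriv_mgf (X := id) (μ := gaussianReal 0 1) (t := 0)
    (by simp [integrableExpSet_id_gaussianReal]) n
  simpa [mgf_id_gaussianReal] using h.symm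

lemma deriv_mul_exp_sq_div_two {p p' : ℝ → ℝ} (hp : ∀ t, HasDerivAt p (p' t) t) :
    deriv (fun t ↦ p t * rexp (t ^ 2 / 2)) = fun t ↦ (p' t + t * p t) * rexp (t ^ 2 / 2) := by
  funext t
  have he : HasDerivAt (fun t ↦ rexp (t ^ 2 / 2)) (rexp (t ^ 2 / 2) * (↑2 * t ^ 1 / 2)) t :=
    ((hasDerivAt_pow 2 t).div_const 2).exp
  refine ((hp t).mul he).deriv.trans ?_
  ring

lemma integral_pow_gaussianReal_zero_one :
    ∫ x, x ^ 2 ∂gaussianReal 0 1 = 1 ∧ ∫ x, x ^ 3 ∂gaussianReal 0 1 = 0 ∧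
      ∫ x, x ^ 4 ∂gaussianReal 0 1 = 3 := by
  have d1 : deriv (fun t ↦ rexp (t ^ 2 / 2)) = fun t ↦ t * rexp (t ^ 2 / 2) := by
    simpa using deriv_mul_exp_sq_div_two (p := fun _ ↦ 1) (fun t ↦ hasDerivAt_const t 1)
  have d2 : deriv (fun t ↦ t * rexp (t ^ 2 / 2)) = fun t ↦ (1 + t ^ 2) * rexp (t ^ 2 / 2) :=
    (deriv_mul_exp_sq_div_two (fun t ↦ hasDerivAt_id' t)).trans (by ext; ring)
  have d3 : deriv (fun t ↦ (1 + t ^ 2) * rexp (t ^ 2 / 2)) =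
      fun t ↦ (3 * t + t ^ 3) * rexp (t ^ 2 / 2) :=
    (deriv_mul_exp_sq_div_two fun t ↦ (hasDerivAt_pow 2 t).const_add 1).trans (by ext; ring)
  have d4 : deriv (fun t ↦ (3 * t + t ^ 3) * rexp (t ^ 2 / 2)) =
      fun t ↦ (3 + 6 * t ^ 2 + t ^ 4) * rexp (t ^ 2 / 2) :=
    (deriv_mul_exp_sq_div_two (p := fun t ↦ 3 * t + t ^ 3) fun t ↦
      ((hasDerivAt_id' t).const_mul 3).add (hasDerivAt_pow 3 t)).trans (by ext; ring)
  simp [integral_pow_gaussianReal_eq_iteratedDeriv, iteratedDeriv_succ, d1, d2, d3, d4]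

lemma memLp_sq_gaussianReal : MemLp (fun x : ℝ ↦ x ^ 2) 2 (gaussianReal 0 1) := by
  refine (memLp_two_iff_integrable_sq (by fun_prop)).2 ?_
  refine ((memLp_id_gaussianReal 4).integrable_norm_pow' (p := 4)).congr (ae_of_all _ fun x ↦ ?_)
  simp [← pow_mul, Even.pow_abs ⟨2, rfl⟩]

lemma integral_mul_add_mul_sq_gaussianReal (a c : ℝ) :
    ∫ x, a * x + c * x ^ 2 ∂gaussianReal 0 1 = c := by
  have hid : Integrable (fun x : ℝ ↦ x) (gaussianReal 0 1) :=
    (memLp_id_gaussianReal 1).integrable le_rfl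
  rw [integral_add (hid.const_mul a) (memLp_sq_gaussianReal.integrable one_le_two |>.const_mul c),
    integral_const_mul, integral_const_mul, integral_id_gaussianReal,
    integral_pow_gaussianReal_zero_one.1]
  ring

lemma variance_mul_add_mul_sq_gaussianReal (a c : ℝ) :
    Var[fun x ↦ a * x + c * x ^ 2; gaussianReal 0 1] = a ^ 2 + 2 * c ^ 2 := by
  obtain ⟨h2, h3, h4⟩ := integral_pow_gaussianReal_zero_one
  have hid : MemLp (fun x : ℝ ↦ x) 2 (gaussianReal 0 1) := memLp_id_gaussianReal 2
  have hvar_sq : Var[fun x : ℝ ↦ x ^ 2; gaussianReal 0 1] = 2 := by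
    rw [variance_eq_sub memLp_sq_gaussianReal]
    simp only [Pi.pow_apply, ← pow_mul]
    norm_num [h2, h4]
  have hcov : cov[fun x : ℝ ↦ x, fun x ↦ x ^ 2; gaussianReal 0 1] = 0 := by
    rw [covariance_eq_sub hid memLp_sq_gaussianReal]
    simp [← pow_succ', h3]
  rw [variance_fun_add (hid.const_mul a) (memLp_sq_gaussianReal.const_mul c),
    covariance_const_mul_left, covariance_const_mul_right, variance_const_mul,
    variance_const_mul, hvar_sq, hcov, variance_fun_id_gaussianReal, NNReal.coe_one]
  ring

noncomputable def unbiasedSqEstimate (b θ ε x : ℝ) : ℝ := ((b * θ + ε * x) ^ 2 - ε ^ 2) / b ^ 2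

section UnbiasedSqEstimate

variable {b θ ε : ℝ}

lemma unbiasedSqEstimate_eq_quadratic (hb : b ≠ 0) : unbiasedSqEstimate b θ ε =
    fun x ↦ (θ ^ 2 - (ε / b) ^ 2) + (2 * θ * ε / b * x + (ε / b) ^ 2 * x ^ 2) := by
  ext x
  unfold unbiasedSqEstimate
  field_simp
  ring

lemma memLp_unbiasedSqEstimate (hb : b ≠ 0) :
    MemLp (unbiasedSqEstimate b θ ε) 2 (gaussianReal 0 1) := by
  have hid : MemLp (fun x : ℝ ↦ x) 2 (gaussianReal 0 1) := memLp_id_gaussianReal 2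
  have h := (memLp_const (θ ^ 2 - (ε / b) ^ 2)).add
    ((hid.const_mul (2 * θ * ε / b)).add (memLp_sq_gaussianReal.const_mul ((ε / b) ^ 2)))
  rw [unbiasedSqEstimate_eq_quadratic hb]
  exact h

lemma integral_unbiasedSqEstimate (hb : b ≠ 0) :
    ∫ x, unbiasedSqEstimate b θ ε x ∂gaussianReal 0 1 = θ ^ 2 := by
  have hid : Integrable (fun x : ℝ ↦ x) (gaussianReal 0 1) :=
    (memLp_id_gaussianReal 1).integrable le_rfl
  have hquad : Integrable (fun x ↦ 2 * θ * ε / b * x + (ε / b) ^ 2 * x ^ 2) (gaussianReal 0 1) :=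
    (hid.const_mul _).add ((memLp_sq_gaussianReal.integrable one_le_two).const_mul _)
  rw [unbiasedSqEstimate_eq_quadratic hb, integral_add (integrable_const _) hquad,
    integral_mul_add_mul_sq_gaussianReal]
  simp

lemma variance_unbiasedSqEstimate (hb : b ≠ 0) :
    Var[unbiasedSqEstimate b θ ε; gaussianReal 0 1] =
      4 * ε ^ 2 * θ ^ 2 / b ^ 2 + 2 * ε ^ 4 / b ^ 4 := by
  rw [unbiasedSqEstimate_eq_quadratic hb, variance_const_add (by fun_prop),
    variance_mul_add_mul_sq_gaussianReal]
  field_simp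
  ring

end UnbiasedSqEstimate

section IndependentSum

variable {Ω E ι : Type*} {mΩ : MeasurableSpace Ω} {μ : Measure Ω}
  {mE : MeasurableSpace E} {ν : ι → Measure E} {ξ : ι → Ω → E} {f : ι → E → ℝ}

lemma memLp_sum_comp_of_hasLaw (hξ : ∀ i, HasLaw (ξ i) (ν i) μ) (hf : ∀ i, MemLp (f i) 2 (ν i))
    (s : Finset ι) : MemLp (fun ω ↦ ∑ i ∈ s, f i (ξ i ω)) 2 μ :=
  memLp_finsetSum s fun i _ ↦ ((hξ i).map_eq ▸ hf i).comp_of_map (hξ i).aemeasurable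

lemma integral_sum_comp_of_hasLaw (hξ : ∀ i, HasLaw (ξ i) (ν i) μ)
    (hf : ∀ i, Integrable (f i) (ν i)) (s : Finset ι) :
    μ[fun ω ↦ ∑ i ∈ s, f i (ξ i ω)] = ∑ i ∈ s, ∫ x, f i x ∂ν i := by
  rw [integral_finsetSum s fun i _ ↦ ((hξ i).map_eq ▸ hf i).comp_aemeasurable (hξ i).aemeasurable]
  exact sum_congr rfl fun i _ ↦ (hξ i).integral_comp (hf i).aestronglyMeasurable

lemma variance_sum_comp_of_iIndepFun (hind : iIndepFun ξ μ) (hξ : ∀ i, HasLaw (ξ i) (ν i) μ)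
    (hf : ∀ i, MemLp (f i) 2 (ν i)) (s : Finset ι) :
    Var[fun ω ↦ ∑ i ∈ s, f i (ξ i ω); μ] = ∑ i ∈ s, Var[f i; ν i] := by
  have hf_map : ∀ i, AEMeasurable (f i) (μ.map (ξ i)) := fun i ↦
    (hξ i).map_eq ▸ (hf i).aestronglyMeasurable.aemeasurable
  have hpair : Set.Pairwise ↑s fun i j ↦ (f i ∘ ξ i) ⟂ᵢ[μ] (f j ∘ ξ j) := fun i _ j _ hij ↦
    (hind.indepFun hij).comp₀ (hξ i).aemeasurable (hξ j).aemeasurable (hf_map i) (hf_map j)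
  have hsum : (fun ω ↦ ∑ i ∈ s, f i (ξ i ω)) = ∑ i ∈ s, f i ∘ ξ i := by
    ext ω; simp
  rw [hsum, IndepFun.variance_sum (fun i _ ↦ ((hξ i).map_eq ▸ hf i).comp_of_map
    (hξ i).aemeasurable) hpair]
  refine sum_congr rfl fun i _ ↦ ?_
  rw [← (hξ i).map_eq, variance_map (hf_map i) (hξ i).aemeasurable]

end IndependentSum

lemma measure_le_le_variance_div_sq {Ω : Type*} {mΩ : MeasurableSpace Ω} {μ : Measure Ω}
    [IsFiniteMeasure μ] {X : Ω → ℝ} (hX : MemLp X 2 μ) {t : ℝ} (ht : t < μ[X]) :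
    μ {ω | X ω ≤ t} ≤ ENNReal.ofReal (Var[X; μ] / (μ[X] - t) ^ 2) := by
  refine (measure_mono fun ω (hω : X ω ≤ t) ↦ ?_).trans
    (meas_ge_le_variance_div_sq hX (sub_pos.2 ht))
  show μ[X] - t ≤ |X ω - μ[X]|
  rw [abs_sub_comm]
  exact (sub_le_sub_left hω _).trans (le_abs_self _)

lemma two_mul_sq_add_four_mul_div_sq_le {C C₁ r m : ℝ} (hC₁ : 0 < C₁) (hC : C₁ < C)
    (hr : 0 ≤ r) (hm : C * r < m) :
    (2 * r ^ 2 + 4 * r * m) / (m - C₁ * r) ^ 2 ≤ (2 + 4 * C) / (C - C₁) ^ 2 := by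
  have hCC₁ : 0 < C - C₁ := sub_pos.2 hC
  have hmr : 0 < m - C₁ * r := by nlinarith
  rw [div_le_div_iff₀ (by positivity) (by positivity)]
  nlinarith [sq_nonneg (m - C * r), mul_nonneg (mul_nonneg (sub_nonneg.2 hm.le) hCC₁.le) hr,
    mul_nonneg (mul_nonneg (mul_nonneg (sub_nonneg.2 hm.le) hCC₁.le) hr) (hC₁.trans hC).le,
    mul_nonneg (mul_nonneg (mul_nonneg (sub_nonneg.2 hm.le) hCC₁.le) hr) hC₁.le,
    mul_nonneg (sq_nonneg (m - C * r)) (hC₁.trans hC).le]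

lemma sum_variance_unbiasedSqEstimate_le {ι : Type*} {s : Finset ι} {b θ : ι → ℝ} (ε : ℝ)
    (hmax : ∀ l ∈ s, ((b l) ^ 2)⁻¹ ≤ √(∑ k ∈ s, ((b k) ^ 4)⁻¹)) :
    ∑ k ∈ s, (4 * ε ^ 2 * θ k ^ 2 / b k ^ 2 + 2 * ε ^ 4 / b k ^ 4) ≤
      2 * (ε ^ 2 * √(∑ k ∈ s, ((b k) ^ 4)⁻¹)) ^ 2 +
        4 * (ε ^ 2 * √(∑ k ∈ s, ((b k) ^ 4)⁻¹)) * ∑ k ∈ s, θ k ^ 2 := by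
  set σ := √(∑ k ∈ s, ((b k) ^ 4)⁻¹)
  have hweighted : ∑ k ∈ s, θ k ^ 2 / b k ^ 2 ≤ σ * ∑ k ∈ s, θ k ^ 2 := by
    rw [mul_sum]
    exact sum_le_sum fun k hk ↦ by
      rw [div_eq_mul_inv, mul_comm σ]; exact mul_le_mul_of_nonneg_left (hmax k hk) (sq_nonneg _)
  have hσ : σ ^ 2 = ∑ k ∈ s, ((b k) ^ 4)⁻¹ := sq_sqrt (sum_nonneg fun k _ ↦ by positivity)
  simp only [sum_add_distrib, mul_div_assoc, ← mul_sum, div_eq_mul_inv (ε ^ 4)]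
  rw [← hσ]
  nlinarith [mul_le_mul_of_nonneg_left hweighted (by positivity : (0 : ℝ) ≤ 4 * ε ^ 2)]

theorem stmt2_general {Ω : Type*} [MeasurableSpace Ω] (μ : Measure Ω) [IsProbabilityMeasure μ]
    (ξ : ℕ → Ω → ℝ) (hmeas : ∀ k, Measurable (ξ k))
    (hindep : iIndepFun ξ μ)
    (hlaw : ∀ k, μ.map (ξ k) = gaussianReal 0 1)
    (b θ : ℕ → ℝ) (hb : ∀ k, 0 < b k)
    (ε : ℝ)
    (D : ℕ)
    (β C C1 : ℝ) (hC1 : 0 < C1) (hCC1 : C1 < C)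
    (hβ : (2 + 4 * C) / (C - C1)^2 ≤ β)
    (hmax : ∀ l ∈ Finset.Icc 1 D,
      ((b l)^2)⁻¹ ≤ Real.sqrt (∑ k ∈ Finset.Icc 1 D, ((b k)^4)⁻¹))
    (henergy : C * ε^2 * Real.sqrt (∑ k ∈ Finset.Icc 1 D, ((b k)^4)⁻¹)
        < ∑ k ∈ Finset.Icc 1 D, (θ k)^2) :
    μ {ω | ∑ k ∈ Finset.Icc 1 D, ((b k * θ k + ε * ξ k ω)^2 - ε^2) / (b k)^2
        ≤ C1 * ε^2 * Real.sqrt (∑ k ∈ Finset.Icc 1 D, ((b k)^4)⁻¹)}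
      ≤ ENNReal.ofReal β := by
  set r := ε ^ 2 * √(∑ k ∈ Icc 1 D, ((b k) ^ 4)⁻¹)
  set T : Ω → ℝ := fun ω ↦ ∑ k ∈ Icc 1 D, unbiasedSqEstimate (b k) (θ k) ε (ξ k ω)
  have hξ : ∀ k, HasLaw (ξ k) (gaussianReal 0 1) μ := fun k ↦ ⟨(hmeas k).aemeasurable, hlaw k⟩
  have hf : ∀ k, MemLp (unbiasedSqEstimate (b k) (θ k) ε) 2 (gaussianReal 0 1) := fun k ↦
    memLp_unbiasedSqEstimate (hb k).ne'
  have hmean : μ[T] = ∑ k ∈ Icc 1 D, θ k ^ 2 := by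
    rw [integral_sum_comp_of_hasLaw hξ fun k ↦ (hf k).integrable one_le_two]
    exact sum_congr rfl fun k _ ↦ integral_unbiasedSqEstimate (hb k).ne'
  have hvar : Var[T; μ] ≤ 2 * r ^ 2 + 4 * r * ∑ k ∈ Icc 1 D, θ k ^ 2 := by
    rw [variance_sum_comp_of_iIndepFun hindep hξ hf,
      sum_congr rfl fun k _ ↦ variance_unbiasedSqEstimate (hb k).ne']
    exact sum_variance_unbiasedSqEstimate_le ε hmax
  have hr : 0 ≤ r := by positivity
  have henergy' : C * r < μ[T] := by rw [hmean, ← mul_assoc]; exact henergy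
  calc _ = μ {ω | T ω ≤ C1 * r} := by simp only [T, r, unbiasedSqEstimate, mul_assoc]
    _ ≤ ENNReal.ofReal (Var[T; μ] / (μ[T] - C1 * r) ^ 2) :=
      measure_le_le_variance_div_sq (memLp_sum_comp_of_hasLaw hξ hf _) (by nlinarith)
    _ ≤ ENNReal.ofReal β := by
      refine ENNReal.ofReal_le_ofReal ((div_le_div_of_nonneg_right hvar (sq_nonneg _)).trans ?_)
      rw [hmean] at henergy' ⊢
      exact (two_mul_sq_add_four_mul_div_sq_le hC1 hCC1 hr henergy').trans hβ

/-- Type-II error bound for the inverse chi-square test: if the signal energy on the first `D`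
frequencies exceeds `C ε² √(∑ b_k⁻⁴)` then `P_θ(T_D ≤ t) ≤ β`. -/
theorem stmt2 {Ω : Type*} [MeasurableSpace Ω] (μ : Measure Ω) [IsProbabilityMeasure μ]
    (ξ : ℕ → Ω → ℝ) (hmeas : ∀ k, Measurable (ξ k))
    (hindep : iIndepFun ξ μ)
    (hlaw : ∀ k, μ.map (ξ k) = gaussianReal 0 1)
    (b θ : ℕ → ℝ) (hb : ∀ k, 0 < b k)
    (ε : ℝ) (hε : 0 < ε) (hε1 : ε ≤ 1)
    (D : ℕ) (hD : 1 ≤ D)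
    (β C C1 : ℝ) (hC1 : 0 < C1) (hCC1 : C1 < C)
    (hβ : (2 + 4 * C) / (C - C1)^2 ≤ β)
    (hmax : ∀ l ∈ Finset.Icc 1 D,
      ((b l)^2)⁻¹ ≤ Real.sqrt (∑ k ∈ Finset.Icc 1 D, ((b k)^4)⁻¹))
    (henergy : C * ε^2 * Real.sqrt (∑ k ∈ Finset.Icc 1 D, ((b k)^4)⁻¹)
        < ∑ k ∈ Finset.Icc 1 D, (θ k)^2) :
    μ {ω | ∑ k ∈ Finset.Icc 1 D, ((b k * θ k + ε * ξ k ω)^2 - ε^2) / (b k)^2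
        ≤ C1 * ε^2 * Real.sqrt (∑ k ∈ Finset.Icc 1 D, ((b k)^4)⁻¹)}
      ≤ ENNReal.ofReal β :=
  stmt2_general μ ξ hmeas hindep hlaw b θ hb ε D β C C1 hC1 hCC1 hβ hmax henergy
end

section
/- Suppose for all $\varepsilon\in(0,1)$: (a) $C_{\max}\varepsilon^2\sqrt{\sum_{k=1}^{D_\varepsilon}b_k^{-4}} < r_\varepsilon^2$, and (b) for all $\theta$ with $\theta_k = 0$ for $k \leq D_\varepsilon$ and $\sum_{k=1}^{D_\varepsilon}\theta_k^2 \leq C_{\min}\varepsilon^2\sqrt{\sum_{k=1}^{D_\varepsilon} b_k^{-4}}$, one has $\mathbb{P}_\theta(\Delta_\varepsilon = 0) > \beta$. Then every decimation-stable set $\mathcal{H}$ contained in the maxiset $MS(\Delta, r)$ satisfies $\mathcal{H} \subseteq \mathcal{F}^{dec}_{\sqrt{2}r, D}(C_{\min})$, i.e., if $\theta \in \mathcal{H}$ then for all $\varepsilon \in (0,1)$, $\sum_{k>D_\varepsilon}\theta_k^2 < 2r_\varepsilon^2 - C_{\min}\varepsilon^2\sqrt{\sum_{k=1}^{D_\varepsilon}b_k^{-4}}$.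 -/
/-!
The decimation `θ^{(-D_ε)}` of `θ ∈ H` stays in `H ⊆ MS(Δ, r)` and vanishes on the first `D_ε`
coordinates, so by (b) it is accepted with probability `> β`; membership in the maxiset then
forces its norm, which is the tail sum of `θ`, below `r_ε²`. By (a) and `C_min ≤ C_max` the
subtracted term is also below `r_ε²`, and the two bounds add up.
-/

open MeasureTheory Finset

/-- The paper's `θ^{(-n)}`. -/
def decimate (n : ℕ) (θ : ℕ → ℝ) : ℕ → ℝ := fun k => if n < k then θ k else 0

lemma decimate_eq_zero_of_le {n k : ℕ} (θ : ℕ → ℝ) (hk : k ≤ n) : decimate n θ k = 0 :=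
  if_neg hk.not_gt

lemma sum_Icc_sq_decimate (n : ℕ) (θ : ℕ → ℝ) : ∑ k ∈ Icc 1 n, decimate n θ k ^ 2 = 0 :=
  sum_eq_zero fun k hk => by rw [decimate_eq_zero_of_le θ (mem_Icc.mp hk).2, sq, zero_mul]

lemma sq_decimate (n : ℕ) (θ : ℕ → ℝ) (k : ℕ) :
    decimate n θ k ^ 2 = if n < k then θ k ^ 2 else 0 := by
  unfold decimate
  split_ifs <;> simp

theorem stmt11_general {Ω : Type*} [MeasurableSpace Ω] (P : (ℕ → ℝ) → Measure Ω)
    (Δ : ℝ → Ω → Bool) (β : ℝ)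
    (b : ℕ → ℝ)
    (D : ℝ → ℕ)
    (r : ℝ → ℝ)
    (Cmin Cmax : ℝ) (hCmin : 0 < Cmin) (hle : Cmin ≤ Cmax)
    (ha : ∀ ε ∈ Set.Ioo (0:ℝ) 1,
      Cmax * ε^2 * Real.sqrt (∑ k ∈ Finset.Icc 1 (D ε), ((b k)^4)⁻¹) < (r ε)^2)
    (hb2 : ∀ ε ∈ Set.Ioo (0:ℝ) 1, ∀ θ : ℕ → ℝ, (∀ k ≤ D ε, θ k = 0) →
      ∑ k ∈ Finset.Icc 1 (D ε), (θ k)^2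
          ≤ Cmin * ε^2 * Real.sqrt (∑ k ∈ Finset.Icc 1 (D ε), ((b k)^4)⁻¹) →
      ENNReal.ofReal β < P θ {ω | Δ ε ω = false})
    (H : Set (ℕ → ℝ))
    (hdec : ∀ θ ∈ H, ∀ n : ℕ, (fun k => if n < k then θ k else 0) ∈ H)
    (hHMS : H ⊆ {θ : ℕ → ℝ | (Summable fun k => (θ k)^2) ∧ θ 0 = 0 ∧
        ∀ ε ∈ Set.Ioo (0:ℝ) 1, (r ε)^2 ≤ ∑' k, (θ k)^2 →
          P θ {ω | Δ ε ω = false} ≤ ENNReal.ofReal β}) :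
    ∀ θ ∈ H, ∀ ε ∈ Set.Ioo (0:ℝ) 1,
      (∑' k, if D ε < k then (θ k)^2 else 0)
        < 2 * (r ε)^2
            - Cmin * ε^2 * Real.sqrt (∑ k ∈ Finset.Icc 1 (D ε), ((b k)^4)⁻¹) := by
  intro θ hθ ε hε
  set S := Real.sqrt (∑ k ∈ Icc 1 (D ε), ((b k)^4)⁻¹)
  set θ' := decimate (D ε) θ
  have hθ'_mem : θ' ∈ H := hdec θ hθ (D ε)
  have h_not_rejected : ENNReal.ofReal β < P θ' {ω | Δ ε ω = false} :=
    hb2 ε hε θ' (fun _ => decimate_eq_zero_of_le θ)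
      (by rw [sum_Icc_sq_decimate]; positivity)
  have h_tail : ∑' k, θ' k ^ 2 < r ε ^ 2 := by
    by_contra! h
    exact ((hHMS hθ'_mem).2.2 ε hε h).not_gt h_not_rejected
  have h_Cmin : Cmin * ε^2 * S < r ε ^ 2 :=
    lt_of_le_of_lt (by gcongr) (ha ε hε)
  simp only [← sq_decimate]
  linarith

/-- Every decimation-stable subset `𝓗` of the maxiset `MS(Δ,r)` is contained in
`𝓕^dec_{√2 r, D}(C_min)`, under assumptions (a) and (b). -/
theorem stmt11 {Ω : Type*} [MeasurableSpace Ω] (P : (ℕ → ℝ) → Measure Ω)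
    (Δ : ℝ → Ω → Bool) (β : ℝ) (hβ : β ∈ Set.Ioo (0:ℝ) (1/2))
    (b : ℕ → ℝ) (hb : ∀ k, 0 < b k)
    (D : ℝ → ℕ) (hD : ∀ ε, 1 ≤ D ε)
    (r : ℝ → ℝ) (hr : ∀ ε ∈ Set.Ioo (0:ℝ) 1, 0 < r ε)
    (Cmin Cmax : ℝ) (hCmin : 0 < Cmin) (hle : Cmin ≤ Cmax)
    (ha : ∀ ε ∈ Set.Ioo (0:ℝ) 1,
      Cmax * ε^2 * Real.sqrt (∑ k ∈ Finset.Icc 1 (D ε), ((b k)^4)⁻¹) < (r ε)^2)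
    (hb2 : ∀ ε ∈ Set.Ioo (0:ℝ) 1, ∀ θ : ℕ → ℝ, (∀ k ≤ D ε, θ k = 0) →
      ∑ k ∈ Finset.Icc 1 (D ε), (θ k)^2
          ≤ Cmin * ε^2 * Real.sqrt (∑ k ∈ Finset.Icc 1 (D ε), ((b k)^4)⁻¹) →
      ENNReal.ofReal β < P θ {ω | Δ ε ω = false})
    (H : Set (ℕ → ℝ))
    (hdec : ∀ θ ∈ H, ∀ n : ℕ, (fun k => if n < k then θ k else 0) ∈ H)
    (hHMS : H ⊆ {θ : ℕ → ℝ | (Summable fun k => (θ k)^2) ∧ θ 0 = 0 ∧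
        ∀ ε ∈ Set.Ioo (0:ℝ) 1, (r ε)^2 ≤ ∑' k, (θ k)^2 →
          P θ {ω | Δ ε ω = false} ≤ ENNReal.ofReal β}) :
    ∀ θ ∈ H, ∀ ε ∈ Set.Ioo (0:ℝ) 1,
      (∑' k, if D ε < k then (θ k)^2 else 0)
        < 2 * (r ε)^2
            - Cmin * ε^2 * Real.sqrt (∑ k ∈ Finset.Icc 1 (D ε), ((b k)^4)⁻¹) :=
  stmt11_general P Δ β b D r Cmin Cmax hCmin hle ha hb2 H hdec hHMS
end
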